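/- Let C ≤ SL_3(R) be the group of positive diagonal matrices and let P_n be the matrix with rows (1, n, n²/2), (0, 1, n), (0, 0, 1). Then P_n C P_n^{-1} converges, as n → ∞, to the full upper-triangular unipotent group N_1 = { matrices with rows (1, s, t), (0, 1, s), (0, 0, 1) : s, t ∈ R }. -/

import Mathlib

/-!
Conjugating `diag(a, b, c)` by `P_n` gives the upper triangular matrix with diagonal `(a, b, c)`,
superdiagonal `n (b - a)`, `n (c - b)` and corner `n² (a - 2b + c) / 2`. Writing `ε = 1 / n`, these
entries satisfy polynomial equations in `(ε, M)` which at `ε = 0` say exactly that `M ∈ N₁`; as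
they define a closed set, every subsequential limit lies in `N₁`. Conversely,
`diag(1 - sε, 1, 1 + sε + 2tε²)` is conjugated to the matrix with rows `(1 - sε, s, t)`,
`(0, 1, s + 2tε)`, `(0, 0, 1 + sε + 2tε²)`, which tends to the given element of
`N₁`; rescaling by the cube root `λ → 1` that normalises the determinant puts it in `P_n C P_n⁻¹`.
-/

open Filter Topology Matrix

/-- Convergence of a sequence of subsets (subgroups) of a topological space:
(a) every element of `L` is a limit of a sequence with `n`-th term in `H n`;
(b) every subsequential limit of such sequences lies in `L`. -/
def SubgroupConverges {M : Type*} [TopologicalSpace M]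
    (H : ℕ → Set M) (L : Set M) : Prop :=
  (∀ l ∈ L, ∃ h : ℕ → M, (∀ n, h n ∈ H n) ∧ Tendsto h atTop (𝓝 l)) ∧
  (∀ h : ℕ → M, (∀ n, h n ∈ H n) → ∀ φ : ℕ → ℕ, StrictMono φ → ∀ l : M,
    Tendsto (h ∘ φ) atTop (𝓝 l) → l ∈ L)

/-- The positive diagonal Cartan subgroup of SL₃(ℝ), as a set of matrices. -/
def CartanC : Set (Matrix (Fin 3) (Fin 3) ℝ) :=
  {M | ∃ a b : ℝ, 0 < a ∧ 0 < b ∧ M = Matrix.diagonal ![a, b, 1 / (a * b)]}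

noncomputable def P3 (n : ℕ) : Matrix (Fin 3) (Fin 3) ℝ :=
  !![1, (n : ℝ), (n : ℝ) ^ 2 / 2; 0, 1, (n : ℝ); 0, 0, 1]

def groupN1 : Set (Matrix (Fin 3) (Fin 3) ℝ) :=
  {M | ∃ s t : ℝ, M = !![1, s, t; 0, 1, s; 0, 0, 1]}

lemma P3_inv (n : ℕ) :
    (P3 n)⁻¹ = !![1, -(n : ℝ), (n : ℝ) ^ 2 / 2; 0, 1, -(n : ℝ); 0, 0, 1] := by
  refine Matrix.inv_eq_right_inv ?_
  ext i j
  fin_cases i <;> fin_cases j <;> simp [P3, Matrix.mul_apply, Fin.sum_univ_three]; ring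

lemma P3_mul_diagonal_mul_inv (n : ℕ) (a b c : ℝ) :
    P3 n * diagonal ![a, b, c] * (P3 n)⁻¹ =
      !![a, n * (b - a), n ^ 2 * (a - 2 * b + c) / 2; 0, b, n * (c - b); 0, 0, c] := by
  rw [P3_inv]
  ext i j
  fin_cases i <;> fin_cases j <;>
    simp [P3, Matrix.mul_apply, Fin.sum_univ_three, Matrix.vecMul_diagonal] <;> ring

lemma one_mem_cartanC : (1 : Matrix (Fin 3) (Fin 3) ℝ) ∈ CartanC :=
  ⟨1, 1, one_pos, one_pos, by rw [← diagonal_one]; congr; ext i; fin_cases i <;> simp⟩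

lemma smul_diagonal_mem_cartanC {x y : ℝ} (hx : 0 < x) (hy : 0 < y) :
    (x * y) ^ (-(1 / 3 : ℝ)) • diagonal ![x, 1, y] ∈ CartanC := by
  set r := (x * y) ^ (-(1 / 3 : ℝ))
  have hr3 : r ^ 3 * (x * y) = 1 := by
    rw [← Real.rpow_natCast, ← Real.rpow_mul (by positivity)]
    norm_num [Real.rpow_neg_one]
    field_simp
  have hr : 0 < r := by positivity
  refine ⟨r * x, r, by positivity, hr, ?_⟩
  rw [← diagonal_smul]
  congr 1
  ext i
  fin_cases i <;> simp
  field_simp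
  linear_combination hr3

lemma exists_forall_mem_tendsto_of_eventually_mem {ι M : Type*} [TopologicalSpace M]
    {f : Filter ι} {H : ι → Set M} (hne : ∀ i, (H i).Nonempty) {h : ι → M} {l : M}
    (hmem : ∀ᶠ i in f, h i ∈ H i) (hh : Tendsto h f (𝓝 l)) :
    ∃ h' : ι → M, (∀ i, h' i ∈ H i) ∧ Tendsto h' f (𝓝 l) := by
  classical
  refine ⟨fun i => if h i ∈ H i then h i else (hne i).some, fun i => ?_, ?_⟩
  · dsimp only
    split_ifs with hi
    exacts [hi, (hne i).some_mem]
  · exact hh.congr' (hmem.mono fun i hi => (if_pos hi).symm)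

lemma exists_tendsto_of_mem_groupN1 {l : Matrix (Fin 3) (Fin 3) ℝ} (hl : l ∈ groupN1) :
    ∃ h : ℕ → Matrix (Fin 3) (Fin 3) ℝ,
      (∀ n, h n ∈ (fun M => P3 n * M * (P3 n)⁻¹) '' CartanC) ∧ Tendsto h atTop (𝓝 l) := by
  obtain ⟨s, t, rfl⟩ := hl
  set u : ℝ → ℝ := fun ε => 1 - s * ε
  set v : ℝ → ℝ := fun ε => 1 + s * ε + 2 * t * ε ^ 2
  set G : ℝ → Matrix (Fin 3) (Fin 3) ℝ := fun ε =>
    (u ε * v ε) ^ (-(1 / 3 : ℝ)) • !![u ε, s, t; 0, 1, s + 2 * t * ε; 0, 0, v ε]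
  have hε := tendsto_inv_atTop_nhds_zero_nat (𝕜 := ℝ)
  have hG : ContinuousAt G 0 := by
    have : ContinuousAt (fun ε => (u ε * v ε) ^ (-(1 / 3 : ℝ))) 0 :=
      (Real.continuousAt_rpow_const _ _ (by simp [u, v])).comp (by fun_prop)
    exact this.smul (by fun_prop)
  have hG0 : G 0 = !![1, s, t; 0, 1, s; 0, 0, 1] := by simp [G, u, v]
  have hu : ∀ᶠ n : ℕ in atTop, 0 < u (n : ℝ)⁻¹ :=
    ((by fun_prop : Continuous u).tendsto' 0 1 (by simp [u]) |>.comp hε).eventually_const_lt one_pos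
  have hv : ∀ᶠ n : ℕ in atTop, 0 < v (n : ℝ)⁻¹ :=
    ((by fun_prop : Continuous v).tendsto' 0 1 (by simp [v]) |>.comp hε).eventually_const_lt one_pos
  refine exists_forall_mem_tendsto_of_eventually_mem (h := fun n : ℕ => G (n : ℝ)⁻¹)
    (fun n => ⟨_, Set.mem_image_of_mem _ one_mem_cartanC⟩) ?_ (hG0 ▸ hG.tendsto.comp hε)
  filter_upwards [hu, hv, eventually_ne_atTop 0] with n hun hvn hn
  refine ⟨_, smul_diagonal_mem_cartanC hun hvn, ?_⟩
  simp only [Matrix.mul_smul, Matrix.smul_mul, P3_mul_diagonal_mul_inv, G]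
  congr 1
  ext i j
  fin_cases i <;> fin_cases j <;> simp [u, v] <;> field_simp <;> ring

def IsConjCartanAt (ε : ℝ) (M : Matrix (Fin 3) (Fin 3) ℝ) : Prop :=
  M 1 0 = 0 ∧ M 2 0 = 0 ∧ M 2 1 = 0 ∧ M 1 1 - M 0 0 = ε * M 0 1 ∧ M 2 2 - M 1 1 = ε * M 1 2 ∧
    M 1 2 - M 0 1 = 2 * ε * M 0 2 ∧ M 0 0 * M 1 1 * M 2 2 = 1

lemma isClosed_setOf_isConjCartanAt :
    IsClosed {p : ℝ × Matrix (Fin 3) (Fin 3) ℝ | IsConjCartanAt p.1 p.2} := by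
  simp only [IsConjCartanAt, Set.ofPred_and]
  repeat refine .inter (isClosed_eq (by fun_prop) (by fun_prop)) ?_
  exact isClosed_eq (by fun_prop) (by fun_prop)

lemma isConjCartanAt_of_mem {n : ℕ} (hn : n ≠ 0) {M : Matrix (Fin 3) (Fin 3) ℝ}
    (hM : M ∈ (fun M => P3 n * M * (P3 n)⁻¹) '' CartanC) : IsConjCartanAt (n : ℝ)⁻¹ M := by
  obtain ⟨_, ⟨a, b, ha, hb, rfl⟩, rfl⟩ := hM
  simp only [P3_mul_diagonal_mul_inv, IsConjCartanAt, of_apply, cons_val', cons_val_zero,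
    cons_val_one, cons_val, cons_val_fin_one, one_div, _root_.mul_inv_rev, true_and]
  refine ⟨?_, ?_, ?_, ?_⟩ <;> field_simp
  ring

lemma mem_groupN1_of_isConjCartanAt_zero {M : Matrix (Fin 3) (Fin 3) ℝ}
    (hM : IsConjCartanAt 0 M) : M ∈ groupN1 := by
  obtain ⟨h10, h20, h21, h11, h22, h12, hdet⟩ := hM
  simp only [zero_mul, mul_zero, sub_eq_zero] at h11 h22 h12
  have h00 : M 0 0 = 1 := (Odd.strictMono_pow (R := ℝ) (by decide : Odd 3)).injective <| by
    rw [one_pow, ← hdet, h22, h11]; ring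
  refine ⟨M 0 1, M 0 2, ?_⟩
  ext i j
  fin_cases i <;> fin_cases j <;> simp [*]

lemma mem_groupN1_of_tendsto {h : ℕ → Matrix (Fin 3) (Fin 3) ℝ}
    (hh : ∀ n, h n ∈ (fun M => P3 n * M * (P3 n)⁻¹) '' CartanC) {φ : ℕ → ℕ}
    (hφ : Tendsto φ atTop atTop) {l : Matrix (Fin 3) (Fin 3) ℝ}
    (hl : Tendsto (h ∘ φ) atTop (𝓝 l)) : l ∈ groupN1 := by
  have hpair : Tendsto (fun k => ((φ k : ℝ)⁻¹, h (φ k))) atTop (𝓝 (0, l)) :=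
    (tendsto_inv_atTop_nhds_zero_nat.comp hφ).prodMk_nhds hl
  refine mem_groupN1_of_isConjCartanAt_zero (isClosed_setOf_isConjCartanAt.mem_of_tendsto hpair ?_)
  filter_upwards [hφ.eventually_ne_atTop 0] with k hk
  exact isConjCartanAt_of_mem hk (hh (φ k))

/-- `P_n C P_n⁻¹` converges to the unipotent group `N₁`. -/
theorem cartan_conj_converges_to_N1 :
    SubgroupConverges
      (fun n => (fun M => P3 n * M * (P3 n)⁻¹) '' CartanC) groupN1 :=
  ⟨fun _ hl => exists_tendsto_of_mem_groupN1 hl,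
    fun _ hh _ hφ _ hl => mem_groupN1_of_tendsto hh hφ.tendsto_atTop hl⟩
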